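/- arXiv:2305.13134 — 2 statements merged into one kernel-verified Lean document; each statement's English description precedes it below -/
import Mathlib

section
/- With x₁* = (-r, 0, …, 0), x₂* = (r, 0, …, 0) in ℝⁿ, γᵢ = L²/σᵢ², β = σ₂/σ₁, λ₁ = ((1+β)/(1+2β))·γ₁/(2r) - r/(1+2β), and ν₁ = (r/(2(1+2β)))·√(-(γ₁/r² - 4)((1+β)²γ₁/r² - 4β²)): if r ∈ (L/(2σ₁), (L/2)(1/σ₁ + 1/σ₂)], then the intersection of the set T = {x : (‖x‖² - r²)/(d₁(x)²d₂(x)²) + σ₁σ₂/L² = √(1/d₁(x)² - σ₁²/L²)·√(1/d₂(x)² - σ₂²/L²)} with the sphere ∂B(x₁*, L/σ₁) equals {x = (x₁, x̃) : x₁ = λ₁, ‖x̃‖ = ν₁}. If instead r ∈ (0, L/(2σ₁)], the intersection is empty. -/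
/-!
On the sphere `d₁² = γ₁ = L²/σ₁²`, so the first square root vanishes and the equation of `T`
becomes `‖x‖² - r² + β d₂² = 0` with `d₂ ≠ 0`. Writing `x = (t, x̃)` and `q = ‖x̃‖²`, the sphere
gives `q = γ₁ - (t + r)²`, after which the equation is linear in `t`:
`2r(1 + 2β) t = (1 + β) γ₁ - 2r²`, i.e. `t = λ₁`. On that hyperplane `(1 + 2β) d₂² = 4r² - γ₁`,
so solutions with `d₂ ≠ 0` exist exactly when `L/σ₁ < 2r`; they are the points with
`q = γ₁ - (λ₁ + r)² = ν₁²`, the upper bound on `r` making the radicand of `ν₁` nonnegative.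
-/

open EuclideanSpace

namespace EuclideanSpace

variable {ι : Type*} [Fintype ι] [DecidableEq ι]

theorem norm_sub_single_sq (x : EuclideanSpace ℝ ι) (i : ι) (a : ℝ) :
    ‖x - single i a‖ ^ 2 = (x i - a) ^ 2 + ‖x - single i (x i)‖ ^ 2 := by
  have h (b : ℝ) : ‖x - single i b‖ ^ 2 = ‖x‖ ^ 2 - 2 * b * x i + b ^ 2 := by
    rw [norm_sub_sq_real, PiLp.norm_single, real_inner_comm, inner_single_left, Real.norm_eq_abs,
      sq_abs]
    simp only [RCLike.conj_to_real]
    ring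
  rw [h, h]
  ring

theorem norm_sq_eq_sq_add_norm_sub_single_sq (x : EuclideanSpace ℝ ι) (i : ι) :
    ‖x‖ ^ 2 = x i ^ 2 + ‖x - single i (x i)‖ ^ 2 := by
  simpa [(PiLp.single_eq_zero_iff 2 i).2 rfl] using norm_sub_single_sq x i 0

end EuclideanSpace

def boundarySet {E : Type*} [NormedAddCommGroup E] (r σ₁ σ₂ L : ℝ) (c₁ c₂ : E) : Set E :=
  {x | (‖x‖ ^ 2 - r ^ 2) / (‖x - c₁‖ ^ 2 * ‖x - c₂‖ ^ 2) + σ₁ * σ₂ / L ^ 2 =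
      √(1 / ‖x - c₁‖ ^ 2 - σ₁ ^ 2 / L ^ 2) * √(1 / ‖x - c₂‖ ^ 2 - σ₂ ^ 2 / L ^ 2)}

theorem mem_boundarySet_iff_of_norm_sub_eq {E : Type*} [NormedAddCommGroup E]
    {r σ₁ σ₂ L : ℝ} {c₁ c₂ x : E} (hσ₁ : σ₁ ≠ 0) (hσ₂ : σ₂ ≠ 0) (hL : L ≠ 0)
    (hx : ‖x - c₁‖ = L / σ₁) :
    x ∈ boundarySet r σ₁ σ₂ L c₁ c₂ ↔
      ‖x‖ ^ 2 - r ^ 2 + σ₂ / σ₁ * ‖x - c₂‖ ^ 2 = 0 ∧ ‖x - c₂‖ ^ 2 ≠ 0 := by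
  have hzero : 1 / ‖x - c₁‖ ^ 2 - σ₁ ^ 2 / L ^ 2 = 0 := by
    rw [hx]; field_simp; ring
  simp only [boundarySet, Set.mem_ofPred_eq]
  rw [hzero, Real.sqrt_zero, zero_mul, hx]
  -- at `x = c₂` the quotient is `0` by convention, leaving `σ₁ * σ₂ / L ^ 2 = 0`
  by_cases h₂ : ‖x - c₂‖ = 0
  · simp [h₂, hσ₁, hσ₂, hL]
  · have hfactor : (‖x‖ ^ 2 - r ^ 2) / ((L / σ₁) ^ 2 * ‖x - c₂‖ ^ 2) + σ₁ * σ₂ / L ^ 2 =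
        σ₁ ^ 2 / (L ^ 2 * ‖x - c₂‖ ^ 2) * (‖x‖ ^ 2 - r ^ 2 + σ₂ / σ₁ * ‖x - c₂‖ ^ 2) := by
      field_simp
    rw [hfactor, mul_eq_zero]
    simp [h₂, hσ₁, hL]

theorem boundary_eq_on_sphere_iff {r β γ t q : ℝ} (hβ : 0 < 1 + 2 * β) (hq : 0 ≤ q)
    (hS : (t + r) ^ 2 + q = γ) :
    (t ^ 2 + q - r ^ 2 + β * ((t - r) ^ 2 + q) = 0 ∧ (t - r) ^ 2 + q ≠ 0) ↔
      2 * r * (1 + 2 * β) * t = (1 + β) * γ - 2 * r ^ 2 ∧ γ < 4 * r ^ 2 := by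
  have hd : 0 ≤ (t - r) ^ 2 + q := by positivity
  obtain rfl : q = γ - (t + r) ^ 2 := by linarith
  have hlin : t ^ 2 + (γ - (t + r) ^ 2) - r ^ 2 + β * ((t - r) ^ 2 + (γ - (t + r) ^ 2)) = 0 ↔
      2 * r * (1 + 2 * β) * t = (1 + β) * γ - 2 * r ^ 2 := by
    constructor <;> intro h <;> linear_combination -h
  rw [hlin]
  refine and_congr_right fun h => ?_
  have hmul : (1 + 2 * β) * ((t - r) ^ 2 + (γ - (t + r) ^ 2)) = 4 * r ^ 2 - γ := by
    linear_combination -2 * h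
  rw [← hd.lt_iff_ne', ← mul_pos_iff_of_pos_left hβ, hmul, sub_pos]

theorem mem_boundarySet_inter_sphere_iff {ι : Type*} [Fintype ι] [DecidableEq ι]
    {r σ₁ σ₂ L : ℝ} (hσ₁ : 0 < σ₁) (hσ₂ : 0 < σ₂) (hL : 0 < L) (i : ι) (x : EuclideanSpace ℝ ι) :
    x ∈ boundarySet r σ₁ σ₂ L (single i (-r)) (single i r) ∩
        {x | ‖x - single i (-r)‖ = L / σ₁} ↔
      (x i + r) ^ 2 + ‖x - single i (x i)‖ ^ 2 = L ^ 2 / σ₁ ^ 2 ∧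
        2 * r * (1 + 2 * (σ₂ / σ₁)) * x i = (1 + σ₂ / σ₁) * (L ^ 2 / σ₁ ^ 2) - 2 * r ^ 2 ∧
        L ^ 2 / σ₁ ^ 2 < 4 * r ^ 2 := by
  have hsphere : ‖x - single i (-r)‖ = L / σ₁ ↔
      (x i + r) ^ 2 + ‖x - single i (x i)‖ ^ 2 = L ^ 2 / σ₁ ^ 2 := by
    rw [← sq_eq_sq₀ (norm_nonneg _) (by positivity), norm_sub_single_sq, div_pow, sub_neg_eq_add]
  rw [Set.mem_inter_iff, Set.mem_ofPred_eq, and_comm, hsphere]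
  refine and_congr_right fun hS => ?_
  rw [mem_boundarySet_iff_of_norm_sub_eq hσ₁.ne' hσ₂.ne' hL.ne' (hsphere.2 hS),
    norm_sub_single_sq x i r, norm_sq_eq_sq_add_norm_sub_single_sq x i]
  exact boundary_eq_on_sphere_iff (by positivity) (by positivity) hS

theorem boundarySet_inter_sphere_eq_empty {ι : Type*} [Fintype ι] [DecidableEq ι]
    {r σ₁ σ₂ L : ℝ} (hσ₁ : 0 < σ₁) (hσ₂ : 0 < σ₂) (hL : 0 < L)
    (hγ : 4 * r ^ 2 ≤ L ^ 2 / σ₁ ^ 2) (i : ι) :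
    boundarySet r σ₁ σ₂ L (single i (-r)) (single i r) ∩
        {x : EuclideanSpace ℝ ι | ‖x - single i (-r)‖ = L / σ₁} = ∅ :=
  Set.eq_empty_of_forall_notMem fun x hx =>
    ((mem_boundarySet_inter_sphere_iff hσ₁ hσ₂ hL i x).1 hx).2.2.not_ge hγ

/-- `λ₁` and `ν₁` of the statement, with `β = σ₂ / σ₁` and `γ = γ₁ = L² / σ₁²`: the sphere
`∂B(x₁*, L/σ₁)` meets `T` in the sphere of radius `ν₁` centred on the axis at abscissa `λ₁`. -/
noncomputable def sliceAbscissa (r β γ : ℝ) : ℝ :=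
  ((1 + β) / (1 + 2 * β)) * (γ / (2 * r)) - r / (1 + 2 * β)

noncomputable def sliceRadius (r β γ : ℝ) : ℝ :=
  r / (2 * (1 + 2 * β)) * √(-(γ / r ^ 2 - 4) * ((1 + β) ^ 2 * γ / r ^ 2 - 4 * β ^ 2))

theorem eq_sliceAbscissa_iff {r β γ t : ℝ} (hr : r ≠ 0) (hβ : 1 + 2 * β ≠ 0) :
    t = sliceAbscissa r β γ ↔ 2 * r * (1 + 2 * β) * t = (1 + β) * γ - 2 * r ^ 2 := by
  have h : sliceAbscissa r β γ = ((1 + β) * γ - 2 * r ^ 2) / (2 * r * (1 + 2 * β)) := by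
    unfold sliceAbscissa
    field_simp
  rw [h, eq_div_iff (by positivity), mul_comm]

theorem sliceRadius_sq {r β γ : ℝ} (hr : r ≠ 0) (hβ : 1 + 2 * β ≠ 0) (hγ : γ ≤ 4 * r ^ 2)
    (hβγ : 4 * β ^ 2 * r ^ 2 ≤ (1 + β) ^ 2 * γ) :
    sliceRadius r β γ ^ 2 = γ - (sliceAbscissa r β γ + r) ^ 2 := by
  have hA : 0 ≤ -(γ / r ^ 2 - 4) * ((1 + β) ^ 2 * γ / r ^ 2 - 4 * β ^ 2) := by
    have hr2 : 0 < r ^ 2 := by positivity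
    refine mul_nonneg ?_ ?_
    · rw [neg_nonneg, sub_nonpos, div_le_iff₀ hr2]
      linarith
    · rw [sub_nonneg, le_div_iff₀ hr2]
      linarith
  rw [sliceRadius, mul_pow, Real.sq_sqrt hA, sliceAbscissa]
  field_simp
  ring

theorem mem_boundarySet_inter_sphere_iff_of_lt {ι : Type*} [Fintype ι] [DecidableEq ι]
    {r σ₁ σ₂ L : ℝ} (hσ₁ : 0 < σ₁) (hσ₂ : 0 < σ₂) (hL : 0 < L) (hr : 0 < r)
    (hγ : L ^ 2 / σ₁ ^ 2 < 4 * r ^ 2)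
    (hβγ : 4 * (σ₂ / σ₁) ^ 2 * r ^ 2 ≤ (1 + σ₂ / σ₁) ^ 2 * (L ^ 2 / σ₁ ^ 2))
    (i : ι) (x : EuclideanSpace ℝ ι) :
    x ∈ boundarySet r σ₁ σ₂ L (single i (-r)) (single i r) ∩
        {x | ‖x - single i (-r)‖ = L / σ₁} ↔
      x i = sliceAbscissa r (σ₂ / σ₁) (L ^ 2 / σ₁ ^ 2) ∧
        ‖x - single i (x i)‖ = sliceRadius r (σ₂ / σ₁) (L ^ 2 / σ₁ ^ 2) := by
  have hβ : 1 + 2 * (σ₂ / σ₁) ≠ 0 := by positivity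
  have hν : 0 ≤ sliceRadius r (σ₂ / σ₁) (L ^ 2 / σ₁ ^ 2) := by
    unfold sliceRadius
    positivity
  rw [mem_boundarySet_inter_sphere_iff hσ₁ hσ₂ hL, and_iff_left hγ, and_comm,
    eq_sliceAbscissa_iff hr.ne' hβ, ← sq_eq_sq₀ (norm_nonneg _) hν]
  refine and_congr_right fun hx => ?_
  rw [← eq_sliceAbscissa_iff hr.ne' hβ] at hx
  rw [sliceRadius_sq hr.ne' hβ hγ.le hβγ, ← hx]
  constructor <;> intro h <;> linarith

theorem div_two_mul_lt_iff_sq_div_sq_lt {r σ L : ℝ} (hr : 0 < r) (hσ : 0 < σ) (hL : 0 ≤ L) :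
    L / (2 * σ) < r ↔ L ^ 2 / σ ^ 2 < 4 * r ^ 2 := by
  rw [← div_pow, show 4 * r ^ 2 = (2 * r) ^ 2 by ring,
    pow_lt_pow_iff_left₀ (by positivity) (by positivity) two_ne_zero, div_lt_iff₀ hσ,
    div_lt_iff₀ (by positivity)]
  constructor <;> intro h <;> linarith

theorem sq_le_of_le_half_mul_inv_add_inv {r σ₁ σ₂ L : ℝ} (hr : 0 ≤ r) (hσ₁ : 0 < σ₁)
    (hσ₂ : 0 < σ₂) (h : r ≤ L / 2 * (1 / σ₁ + 1 / σ₂)) :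
    4 * (σ₂ / σ₁) ^ 2 * r ^ 2 ≤ (1 + σ₂ / σ₁) ^ 2 * (L ^ 2 / σ₁ ^ 2) := by
  have hlin : 2 * (σ₂ / σ₁) * r ≤ (1 + σ₂ / σ₁) * (L / σ₁) :=
    calc 2 * (σ₂ / σ₁) * r ≤ 2 * (σ₂ / σ₁) * (L / 2 * (1 / σ₁ + 1 / σ₂)) := by gcongr
      _ = (1 + σ₂ / σ₁) * (L / σ₁) := by field_simp; ring
  calc 4 * (σ₂ / σ₁) ^ 2 * r ^ 2 = (2 * (σ₂ / σ₁) * r) ^ 2 := by ring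
    _ ≤ ((1 + σ₂ / σ₁) * (L / σ₁)) ^ 2 := by gcongr
    _ = (1 + σ₂ / σ₁) ^ 2 * (L ^ 2 / σ₁ ^ 2) := by ring

/-- With `x₁* = (-r,0,…,0)`, `x₂* = (r,0,…,0)`, `γᵢ = L²/σᵢ²`, `β = σ₂/σ₁`,
`λ₁ = ((1+β)/(1+2β))·γ₁/(2r) - r/(1+2β)` and
`ν₁ = (r/(2(1+2β)))·√(-(γ₁/r² - 4)((1+β)²γ₁/r² - 4β²))`: if
`r ∈ (L/(2σ₁), (L/2)(1/σ₁ + 1/σ₂)]`, then the intersection of the set `T` (defined by the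
algebraic boundary equation) with the sphere `∂B(x₁*, L/σ₁)` equals
`{x = (x₁, x̃) : x₁ = λ₁, ‖x̃‖ = ν₁}`.  If instead `r ∈ (0, L/(2σ₁)]`, the intersection
is empty. -/
theorem stmt_11 {n : ℕ} (r σ₁ σ₂ L : ℝ) (hr : 0 < r) (h1 : 0 < σ₁) (h2 : 0 < σ₂) (hL : 0 < L)
    (x₁s x₂s : EuclideanSpace ℝ (Fin (n + 1)))
    (hx1 : x₁s = EuclideanSpace.single 0 (-r)) (hx2 : x₂s = EuclideanSpace.single 0 r) :
    ((L / (2 * σ₁) < r ∧ r ≤ L / 2 * (1 / σ₁ + 1 / σ₂)) →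
      {x : EuclideanSpace ℝ (Fin (n + 1)) |
          (‖x‖ ^ 2 - r ^ 2) / (‖x - x₁s‖ ^ 2 * ‖x - x₂s‖ ^ 2) + σ₁ * σ₂ / L ^ 2 =
            Real.sqrt (1 / ‖x - x₁s‖ ^ 2 - σ₁ ^ 2 / L ^ 2) *
              Real.sqrt (1 / ‖x - x₂s‖ ^ 2 - σ₂ ^ 2 / L ^ 2)} ∩
        {x | ‖x - x₁s‖ = L / σ₁} =
      {x | x 0 = ((1 + σ₂ / σ₁) / (1 + 2 * (σ₂ / σ₁))) * (L ^ 2 / σ₁ ^ 2 / (2 * r)) -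
              r / (1 + 2 * (σ₂ / σ₁)) ∧
            ‖x - EuclideanSpace.single 0 (x 0)‖ =
              r / (2 * (1 + 2 * (σ₂ / σ₁))) *
                Real.sqrt (-(L ^ 2 / σ₁ ^ 2 / r ^ 2 - 4) *
                  ((1 + σ₂ / σ₁) ^ 2 * (L ^ 2 / σ₁ ^ 2) / r ^ 2 - 4 * (σ₂ / σ₁) ^ 2))}) ∧
    (r ≤ L / (2 * σ₁) →
      {x : EuclideanSpace ℝ (Fin (n + 1)) |
          (‖x‖ ^ 2 - r ^ 2) / (‖x - x₁s‖ ^ 2 * ‖x - x₂s‖ ^ 2) + σ₁ * σ₂ / L ^ 2 =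
            Real.sqrt (1 / ‖x - x₁s‖ ^ 2 - σ₁ ^ 2 / L ^ 2) *
              Real.sqrt (1 / ‖x - x₂s‖ ^ 2 - σ₂ ^ 2 / L ^ 2)} ∩
        {x | ‖x - x₁s‖ = L / σ₁} = ∅) := by
  subst hx1 hx2
  constructor
  · rintro ⟨hlow, hup⟩
    have hγ := (div_two_mul_lt_iff_sq_div_sq_lt hr h1 hL.le).1 hlow
    have hβγ := sq_le_of_le_half_mul_inv_add_inv hr.le h1 h2 hup
    exact Set.ext fun x => mem_boundarySet_inter_sphere_iff_of_lt h1 h2 hL hr hγ hβγ 0 x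
  · intro hle
    have hγ := not_lt.1 ((div_two_mul_lt_iff_sq_div_sq_lt hr h1 hL.le).not.1 hle.not_gt)
    exact boundarySet_inter_sphere_eq_empty h1 h2 hL hγ 0
end

section
/- Let x*, x₀ ∈ ℝ² with x₀ ≠ x*, g ∈ ℝ², and σ > 0. There exists a symmetric matrix P ∈ ℝ^{2×2} with minimum eigenvalue exactly σ such that P(x₀ - x*) = g, if and only if ‖x₀ - x*‖ ≤ ‖g‖/σ and either g is a positive multiple of x₀ - x* or ⟨g, x₀ - x*⟩ > σ‖x₀ - x*‖². -/
/-!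
If `P ⪰ σ I` and `P d = g`, then `σ ‖d‖² ≤ ⟪g, d⟫ ≤ ‖g‖ ‖d‖`, which gives the norm bound. In the
equality case `d` lies in the kernel of the positive semidefinite `P - σ I`, so `g = σ d`.

Conversely, if `⟪g, d⟫ > σ ‖d‖²`, put `h = g - σ d`; the rank-one update
`P = σ I + h hᵀ / ⟪h, d⟫` is symmetric, satisfies `P ⪰ σ I` and `P d = g`, and acts as `σ` on the
nonzero space `h⊥`. If instead `g = k d` with `k > 0`, the norm bound gives `k ≥ σ`, and either
`k > σ` (the previous case) or `P = σ I`.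
-/

open Module InnerProductSpace

theorem exists_ne_zero_inner_eq_zero {𝕜 F : Type*} [RCLike 𝕜] [NormedAddCommGroup F]
    [InnerProductSpace 𝕜 F] [FiniteDimensional 𝕜 F] (hF : 2 ≤ finrank 𝕜 F) (h : F) :
    ∃ v : F, v ≠ 0 ∧ ⟪h, v⟫_𝕜 = 0 := by
  have hdim : 0 < finrank 𝕜 (𝕜 ∙ h)ᗮ := by
    have := Submodule.finrank_add_finrank_orthogonal (𝕜 ∙ h)
    have := finrank_span_le_card (R := 𝕜) ({h} : Set F)
    simp only [Set.toFinset_singleton, Finset.card_singleton] at this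
    omega
  obtain ⟨v, hv, hv0⟩ :=
    Submodule.exists_mem_ne_zero_of_ne_bot (Submodule.one_le_finrank_iff.1 hdim)
  exact ⟨v, hv0, Submodule.mem_orthogonal_singleton_iff_inner_right.1 hv⟩

section

variable {E : Type*} [NormedAddCommGroup E] [InnerProductSpace ℝ E]

theorem LinearMap.IsPositive.apply_eq_zero_of_inner_self_eq_zero {T : E →ₗ[ℝ] E}
    (hT : T.IsPositive) {x : E} (hx : ⟪T x, x⟫_ℝ = 0) : T x = 0 := by
  -- `⟪T (x + t • T x), x + t • T x⟫ = 2 t ‖T x‖² + t² ⟪T (T x), T x⟫ ≥ 0` for all `t`,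
  -- so the discriminant `4 ‖T x‖⁴` of this quadratic is `≤ 0`
  have hquad : ∀ t : ℝ, 0 ≤ ⟪T (T x), T x⟫_ℝ * (t * t) + 2 * ‖T x‖ ^ 2 * t + 0 := by
    intro t
    have hcross : ⟪T (T x), x⟫_ℝ = ‖T x‖ ^ 2 := by
      rw [hT.isSymmetric, real_inner_self_eq_norm_sq]
    have h := hT.inner_nonneg_left (x + t • T x)
    simp only [map_add, map_smul, inner_add_left, inner_add_right, real_inner_smul_left,
      real_inner_smul_right, hx, hcross, real_inner_self_eq_norm_sq] at h
    linarith
  have h := discrim_le_zero hquad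
  rw [discrim] at h
  have hnorm : ‖T x‖ ^ 2 = 0 := by nlinarith [pow_nonneg (sq_nonneg ‖T x‖) 2]
  simpa using hnorm

def IsLeastEigenvalue (A : E →ₗ[ℝ] E) (σ : ℝ) : Prop :=
  (∀ v, σ * ‖v‖ ^ 2 ≤ ⟪A v, v⟫_ℝ) ∧ ∃ v, v ≠ 0 ∧ A v = σ • v

theorem LinearMap.IsSymmetric.isPositive_sub_smul_one {A : E →ₗ[ℝ] E} (hA : A.IsSymmetric)
    {σ : ℝ} (hσ : ∀ v, σ * ‖v‖ ^ 2 ≤ ⟪A v, v⟫_ℝ) : (A - σ • 1).IsPositive := by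
  refine ⟨hA.sub (LinearMap.IsSymmetric.id.smul (conj_trivial σ)), fun v => ?_⟩
  simpa [inner_sub_left, real_inner_smul_left, real_inner_self_eq_norm_sq] using hσ v

theorem LinearMap.IsSymmetric.apply_eq_smul_of_inner_eq {A : E →ₗ[ℝ] E} (hA : A.IsSymmetric)
    {σ : ℝ} (hσ : ∀ v, σ * ‖v‖ ^ 2 ≤ ⟪A v, v⟫_ℝ) {d : E} (hd : ⟪A d, d⟫_ℝ = σ * ‖d‖ ^ 2) :
    A d = σ • d := by
  refine sub_eq_zero.1 ((hA.isPositive_sub_smul_one hσ).apply_eq_zero_of_inner_self_eq_zero ?_)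
  simp [inner_sub_left, real_inner_smul_left, hd]

theorem norm_le_norm_div_of_mul_sq_le_inner {σ : ℝ} (hσ : 0 < σ) {d g : E}
    (h : σ * ‖d‖ ^ 2 ≤ ⟪g, d⟫_ℝ) : ‖d‖ ≤ ‖g‖ / σ := by
  rw [le_div_iff₀ hσ]
  nlinarith [real_inner_le_norm g d, norm_nonneg d, norm_nonneg g]

theorem isLeastEigenvalue_smul_one {σ : ℝ} {d : E} (hd : d ≠ 0) :
    IsLeastEigenvalue (σ • 1 : E →ₗ[ℝ] E) σ :=
  ⟨fun v => by simp [real_inner_smul_left], d, hd, rfl⟩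

theorem exists_isSymmetric_isLeastEigenvalue_of_lt_inner [FiniteDimensional ℝ E]
    (hE : 2 ≤ finrank ℝ E) {σ : ℝ} {d g : E} (hgd : σ * ‖d‖ ^ 2 < ⟪g, d⟫_ℝ) :
    ∃ A : E →ₗ[ℝ] E, A.IsSymmetric ∧ IsLeastEigenvalue A σ ∧ A d = g := by
  set h := g - σ • d
  set τ := ⟪h, d⟫_ℝ
  have hτ : 0 < τ := by
    simp only [τ, h, inner_sub_left, real_inner_smul_left, real_inner_self_eq_norm_sq]
    linarith
  let A : E →ₗ[ℝ] E := σ • 1 + τ⁻¹ • (rankOne ℝ h h : E →ₗ[ℝ] E)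
  have hA : ∀ v, A v = σ • v + (τ⁻¹ * ⟪h, v⟫_ℝ) • h := fun v => by simp [A, mul_smul]
  obtain ⟨w, hw0, hw⟩ := exists_ne_zero_inner_eq_zero hE h
  refine ⟨A, (LinearMap.IsSymmetric.id.smul (conj_trivial σ)).add
    ((isSymmetric_rankOne_self h).smul (conj_trivial τ⁻¹)),
    ⟨fun v => ?_, w, hw0, by simp [hA, hw]⟩, by simp [hA, τ, hτ.ne', h]⟩
  rw [hA, inner_add_left, real_inner_smul_left, real_inner_smul_left, real_inner_self_eq_norm_sq,
    real_inner_comm]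
  nlinarith [mul_nonneg (inv_nonneg.2 hτ.le) (sq_nonneg ⟪v, h⟫_ℝ)]

theorem exists_isSymmetric_isLeastEigenvalue_apply_eq_iff [FiniteDimensional ℝ E]
    (hE : 2 ≤ finrank ℝ E) {σ : ℝ} (hσ : 0 < σ) {d g : E} (hd : d ≠ 0) :
    (∃ A : E →ₗ[ℝ] E, A.IsSymmetric ∧ IsLeastEigenvalue A σ ∧ A d = g) ↔
      ‖d‖ ≤ ‖g‖ / σ ∧ ((∃ k : ℝ, 0 < k ∧ g = k • d) ∨ σ * ‖d‖ ^ 2 < ⟪g, d⟫_ℝ) := by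
  constructor
  · rintro ⟨A, hA, ⟨hσA, -⟩, rfl⟩
    have hle : σ * ‖d‖ ^ 2 ≤ ⟪A d, d⟫_ℝ := hσA d
    refine ⟨norm_le_norm_div_of_mul_sq_le_inner hσ hle, ?_⟩
    rcases hle.lt_or_eq with hlt | heq
    · exact .inr hlt
    · exact .inl ⟨σ, hσ, hA.apply_eq_smul_of_inner_eq hσA heq.symm⟩
  · rintro ⟨hdg, ⟨k, hk, rfl⟩ | hlt⟩
    · have hkσ : σ ≤ k := by
        rw [norm_smul, Real.norm_of_nonneg hk.le, le_div_iff₀ hσ] at hdg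
        nlinarith [norm_pos_iff.2 hd]
      rcases hkσ.lt_or_eq with hlt | rfl
      · refine exists_isSymmetric_isLeastEigenvalue_of_lt_inner hE ?_
        rw [real_inner_smul_left, real_inner_self_eq_norm_sq]
        gcongr
      · exact ⟨σ • 1, LinearMap.IsSymmetric.id.smul (conj_trivial σ),
          isLeastEigenvalue_smul_one hd, rfl⟩
    · exact exists_isSymmetric_isLeastEigenvalue_of_lt_inner hE hlt

end

theorem Matrix.isSymmetric_toEuclideanLin_iff_isSymm {n : Type*} [Fintype n] [DecidableEq n]
    {P : Matrix n n ℝ} : P.toEuclideanLin.IsSymmetric ↔ P.IsSymm :=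
  isSymmetric_toEuclideanLin_iff.trans isHermitian_iff_isSymm

/-- Let `x*, x₀ ∈ ℝ²` with `x₀ ≠ x*`, `g ∈ ℝ²`, `σ > 0`.  There exists a
symmetric matrix `P ∈ ℝ^{2×2}` with minimum eigenvalue exactly `σ` (i.e. `P ⪰ σI` and `σ`
is an eigenvalue of `P`) such that `P(x₀ - x*) = g`, if and only if
`‖x₀ - x*‖ ≤ ‖g‖/σ` and either `g` is a positive multiple of `x₀ - x*` or
`⟨g, x₀ - x*⟩ > σ‖x₀ - x*‖²`. -/
theorem stmt_14 (xs x₀ g : EuclideanSpace ℝ (Fin 2)) (hne : x₀ ≠ xs) (σ : ℝ) (hσ : 0 < σ) :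
    (∃ P : Matrix (Fin 2) (Fin 2) ℝ, P.IsSymm ∧
        (∀ v : EuclideanSpace ℝ (Fin 2),
          σ * ‖v‖ ^ 2 ≤ (inner ℝ (Matrix.toEuclideanLin P v) v : ℝ)) ∧
        (∃ v : EuclideanSpace ℝ (Fin 2), v ≠ 0 ∧ Matrix.toEuclideanLin P v = σ • v) ∧
        Matrix.toEuclideanLin P (x₀ - xs) = g) ↔
      (‖x₀ - xs‖ ≤ ‖g‖ / σ ∧
        ((∃ k : ℝ, 0 < k ∧ g = k • (x₀ - xs)) ∨
          σ * ‖x₀ - xs‖ ^ 2 < (inner ℝ g (x₀ - xs) : ℝ))) := by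
  rw [← exists_isSymmetric_isLeastEigenvalue_apply_eq_iff (by simp) hσ (sub_ne_zero.2 hne)]
  simp only [IsLeastEigenvalue, and_assoc]
  constructor
  · rintro ⟨P, hP, hPA⟩
    exact ⟨P.toEuclideanLin, Matrix.isSymmetric_toEuclideanLin_iff_isSymm.2 hP, hPA⟩
  · rintro ⟨A, hA, hPA⟩
    obtain ⟨P, rfl⟩ := Matrix.toEuclideanLin.surjective A
    exact ⟨P, Matrix.isSymmetric_toEuclideanLin_iff_isSymm.1 hA, hPA⟩
end
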